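/- Let k ≥ 1 and let φ be a Boolean function on V = {0,...,k}. Then φ →−* ⊥ (where →−* is the reflexive-transitive closure of →− and ⊥ is the Boolean function with no satisfying valuation) if and only if the subgraph of the hypercube graph G_V induced by the vertex set sat(φ) has a perfect matching. Symmetrically, φ →+* ⊤ (where ⊤ is the Boolean function satisfied by every valuation) if and only if the subgraph of G_V induced by the vertex set 2^V \ sat(φ) has a perfect matching. -/

import Mathlib

open scoped Classical

/-- Flip the membership of variable `l` in valuation `ν`. -/
def flipV {k : ℕ} (ν : Finset (Fin (k + 1))) (l : Fin (k + 1)) : Finset (Fin (k + 1)) :=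
  if l ∈ ν then ν.erase l else insert l ν

lemma flipV_flipV {k : ℕ} (ν : Finset (Fin (k + 1))) (l : Fin (k + 1)) :
    flipV (flipV ν l) l = ν := by
  unfold flipV
  by_cases h : l ∈ ν
  · simp [h, Finset.insert_erase h]
  · simp [h, Finset.erase_insert h]

lemma flipV_ne {k : ℕ} (ν : Finset (Fin (k + 1))) (l : Fin (k + 1)) :
    flipV ν l ≠ ν := by
  unfold flipV
  by_cases h : l ∈ ν
  · simp only [h, if_true]
    intro he
    exact (Finset.notMem_erase l ν) (he.symm ▸ h)
  · simp only [h, if_false]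
    intro he
    exact h (he ▸ Finset.mem_insert_self l ν)

/-- `φ →+ φ'`: there are `ν, l` with `ν ∉ sat(φ)`, `ν^(l) ∉ sat(φ)` and
`sat(φ') = sat(φ) ∪ {ν, ν^(l)}`. -/
def StepPlus (k : ℕ) (φ φ' : Finset (Fin (k + 1)) → Bool) : Prop :=
  ∃ (ν : Finset (Fin (k + 1))) (l : Fin (k + 1)),
    φ ν = false ∧ φ (flipV ν l) = false ∧
    ∀ μ, (φ' μ = true ↔ φ μ = true ∨ μ = ν ∨ μ = flipV ν l)

/-- `φ →− φ'`: remove two adjacent satisfying valuations. -/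
def StepMinus (k : ℕ) (φ φ' : Finset (Fin (k + 1)) → Bool) : Prop :=
  StepPlus k φ' φ

/-- `φ →± φ'`. -/
def StepPM (k : ℕ) (φ φ' : Finset (Fin (k + 1)) → Bool) : Prop :=
  StepPlus k φ φ' ∨ StepMinus k φ φ'

/-- The relation `≃` (equivalently `→±*`): the reflexive transitive closure of `→±`. -/
def EquivPM (k : ℕ) (φ φ' : Finset (Fin (k + 1)) → Bool) : Prop :=
  Relation.ReflTransGen (StepPM k) φ φ'

/-- The hypercube graph `G_V` on the valuations of `V = {0,...,k}`: there is an edge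
between `ν` and `ν^(l)` for every valuation `ν` and variable `l`. -/
def hypercube (k : ℕ) : SimpleGraph (Finset (Fin (k + 1))) where
  Adj ν μ := ∃ l, μ = flipV ν l
  symm := by
    constructor
    rintro ν μ ⟨l, rfl⟩
    exact ⟨l, (flipV_flipV ν l).symm⟩
  loopless := by
    constructor
    rintro ν ⟨l, h⟩
    exact flipV_ne ν l h.symm

/-!
Identify a Boolean function with its set of satisfying valuations. Then `φ →+ φ'` adds to
`sat φ` the two ends of a hypercube edge disjoint from it, and a set is built from `∅` by such
steps exactly when it is the vertex set of a matching: the added edges form the matching, and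
conversely a matching is peeled off one edge at a time. Reading `→−*` backwards gives the first
equivalence; complementation turns adding an edge into removing one, which gives the second.
-/

namespace Relation

theorem reflTransGen_iff_of_equiv {α β : Type*} {r : α → α → Prop} {p : β → β → Prop}
    (e : α ≃ β) (h : ∀ a b, r a b ↔ p (e a) (e b)) {a b : α} :
    ReflTransGen r a b ↔ ReflTransGen p (e a) (e b) := by
  refine ⟨fun hr => hr.lift e fun a b => (h a b).1, fun hp => ?_⟩
  simpa [Function.onFun] using hp.lift e.symm fun c d hcd => (h _ _).2 (by simpa using hcd)

end Relation

namespace SimpleGraph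

variable {V : Type*} {G : SimpleGraph V} {S T : Set V}

theorem exists_isPerfectMatching_induce_iff :
    (∃ M : (G.induce S).Subgraph, M.IsPerfectMatching) ↔
      ∃ M : G.Subgraph, M.verts = S ∧ M.IsMatching := by
  constructor
  · rintro ⟨M, hM, hspan⟩
    refine ⟨M.map (Embedding.induce S).toHom, ?_, hM.map _ (Embedding.induce (G := G) S).injective⟩
    simp [Subgraph.isSpanning_iff.mp hspan, Embedding.induce, Embedding.comap]
  · rintro ⟨M, rfl, hM⟩
    refine ⟨M.comap (Embedding.induce M.verts).toHom, Subgraph.isPerfectMatching_iff.mpr ?_⟩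
    intro v
    obtain ⟨w, hvw, huniq⟩ := hM v.2
    refine ⟨⟨w, M.edge_vert hvw.symm⟩, ⟨M.adj_sub hvw, hvw⟩, fun y hy => Subtype.ext (huniq y hy.2)⟩

variable (G) in
def AddsEdge (S T : Set V) : Prop :=
  ∃ u v, G.Adj u v ∧ u ∉ S ∧ v ∉ S ∧ T = S ∪ {u, v}

theorem AddsEdge.compl (h : G.AddsEdge S T) : G.AddsEdge Tᶜ Sᶜ := by
  obtain ⟨u, v, huv, hu, hv, rfl⟩ := h
  refine ⟨u, v, huv, by simp, by simp, ?_⟩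
  ext x
  by_cases hxu : x = u <;> by_cases hxv : x = v <;> simp_all

theorem addsEdge_compl_iff : G.AddsEdge Tᶜ Sᶜ ↔ G.AddsEdge S T :=
  ⟨fun h => by simpa using h.compl, AddsEdge.compl⟩

theorem reflTransGen_addsEdge_univ_iff :
    Relation.ReflTransGen G.AddsEdge S Set.univ ↔ Relation.ReflTransGen G.AddsEdge ∅ Sᶜ := by
  rw [Relation.reflTransGen_iff_of_equiv compl_involutive.toPerm
    (p := Function.swap G.AddsEdge) fun _ _ => addsEdge_compl_iff.symm]
  simp [Relation.reflTransGen_swap]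

theorem Subgraph.IsMatching.deleteVerts_of_adj {M : G.Subgraph} (hM : M.IsMatching)
    {u v : V} (huv : M.Adj u v) : (M.deleteVerts {u, v}).IsMatching := by
  rintro x ⟨hxM, hx⟩
  obtain ⟨y, hxy, huniq⟩ := hM hxM
  refine ⟨y, Subgraph.deleteVerts_adj.mpr ⟨hxM, hx, M.edge_vert hxy.symm, ?_, hxy⟩,
    fun z hz => huniq z (Subgraph.deleteVerts_adj.mp hz).2.2.2.2⟩
  rintro (rfl | rfl)
  · exact hx (Or.inr (hM.eq_of_adj_left huv hxy.symm).symm)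
  · exact hx (Or.inl (hM.eq_of_adj_right huv hxy).symm)

theorem exists_isMatching_of_reflTransGen_addsEdge
    (h : Relation.ReflTransGen G.AddsEdge ∅ S) : ∃ M : G.Subgraph, M.verts = S ∧ M.IsMatching := by
  induction h with
  | refl => exact ⟨⊥, rfl, by simp [Subgraph.IsMatching]⟩
  | tail _ hstep ih =>
    obtain ⟨u, v, huv, hu, hv, rfl⟩ := hstep
    obtain ⟨M, rfl, hM⟩ := ih
    refine ⟨M ⊔ G.subgraphOfAdj huv, by simp, hM.sup (.subgraphOfAdj huv) ?_⟩
    simpa [hM.support_eq_verts] using ⟨hu, hv⟩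

theorem Subgraph.IsMatching.reflTransGen_addsEdge [Finite V] {M : G.Subgraph}
    (hM : M.IsMatching) : Relation.ReflTransGen G.AddsEdge ∅ M.verts := by
  induction hn : M.verts.ncard using Nat.strong_induction_on generalizing M with
  | _ n ih =>
    obtain hempty | ⟨u, hu⟩ := M.verts.eq_empty_or_nonempty
    · rw [hempty]
    obtain ⟨v, huv, -⟩ := hM hu
    have hv : v ∈ M.verts := M.edge_vert huv.symm
    have hlt : (M.deleteVerts {u, v}).verts.ncard < n :=
      hn ▸ Set.ncard_lt_ncard (Set.sdiff_ssubset_left_iff.mpr ⟨u, hu, by simp⟩)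
    refine (ih _ hlt (hM.deleteVerts_of_adj huv) rfl).tail
      ⟨u, v, M.adj_sub huv, by simp, by simp, (Set.sdiff_union_of_subset ?_).symm⟩
    simp [Set.insert_subset_iff, hu, hv]

theorem reflTransGen_addsEdge_empty_iff [Finite V] :
    Relation.ReflTransGen G.AddsEdge ∅ S ↔ ∃ M : G.Subgraph, M.verts = S ∧ M.IsMatching :=
  ⟨exists_isMatching_of_reflTransGen_addsEdge, fun ⟨_, hS, hM⟩ => hS ▸ hM.reflTransGen_addsEdge⟩

end SimpleGraph

noncomputable def satEquiv (V : Type*) : (V → Bool) ≃ Set V where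
  toFun φ := {ν | φ ν = true}
  invFun S ν := decide (ν ∈ S)
  left_inv φ := by ext; simp
  right_inv S := by ext; simp

theorem stepPlus_iff_addsEdge {k : ℕ} (φ φ' : Finset (Fin (k + 1)) → Bool) :
    StepPlus k φ φ' ↔ (hypercube k).AddsEdge {ν | φ ν = true} {ν | φ' ν = true} := by
  constructor
  · rintro ⟨ν, l, hν, hνl, hsat⟩
    exact ⟨ν, flipV ν l, ⟨l, rfl⟩, by simpa, by simpa, by
      ext μ
      simp only [Set.mem_ofPred_eq, Set.mem_union, Set.mem_insert_iff, Set.mem_singleton_iff, hsat]⟩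
  · rintro ⟨ν, _, ⟨l, rfl⟩, hν, hνl, hsat⟩
    exact ⟨ν, l, by simpa using hν, by simpa using hνl, fun μ => by
      simpa only [Set.mem_ofPred_eq, Set.mem_union, Set.mem_insert_iff, Set.mem_singleton_iff]
        using Set.ext_iff.mp hsat μ⟩

theorem reflTransGen_stepPlus_iff {k : ℕ} {φ ψ : Finset (Fin (k + 1)) → Bool} :
    Relation.ReflTransGen (StepPlus k) φ ψ ↔
      Relation.ReflTransGen (hypercube k).AddsEdge {ν | φ ν = true} {ν | ψ ν = true} :=
  Relation.reflTransGen_iff_of_equiv (satEquiv _) stepPlus_iff_addsEdge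

theorem stmt17_general (k : ℕ) (φ : Finset (Fin (k + 1)) → Bool) :
    (Relation.ReflTransGen (StepMinus k) φ (fun _ => false) ↔
      ∃ M : ((hypercube k).induce {ν | φ ν = true}).Subgraph, M.IsPerfectMatching) ∧
    (Relation.ReflTransGen (StepPlus k) φ (fun _ => true) ↔
      ∃ M : ((hypercube k).induce {ν | φ ν = false}).Subgraph, M.IsPerfectMatching) := by
  simp only [SimpleGraph.exists_isPerfectMatching_induce_iff,
    ← SimpleGraph.reflTransGen_addsEdge_empty_iff]
  constructor
  · rw [show StepMinus k = Function.swap (StepPlus k) from rfl, Relation.reflTransGen_swap,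
      reflTransGen_stepPlus_iff]
    simp
  · rw [reflTransGen_stepPlus_iff]
    simpa [Set.compl_ofPred] using
      SimpleGraph.reflTransGen_addsEdge_univ_iff (G := hypercube k) (S := {ν | φ ν = true})

/-- `φ →−* ⊥` iff the subgraph of `G_V` induced by `sat(φ)` has a perfect
matching, and `φ →+* ⊤` iff the subgraph of `G_V` induced by the complement of `sat(φ)`
has a perfect matching. -/
theorem stmt17 (k : ℕ) (hk : 1 ≤ k) (φ : Finset (Fin (k + 1)) → Bool) :
    (Relation.ReflTransGen (StepMinus k) φ (fun _ => false) ↔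
      ∃ M : ((hypercube k).induce {ν | φ ν = true}).Subgraph, M.IsPerfectMatching) ∧
    (Relation.ReflTransGen (StepPlus k) φ (fun _ => true) ↔
      ∃ M : ((hypercube k).induce {ν | φ ν = false}).Subgraph, M.IsPerfectMatching) :=
  stmt17_general k φ
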